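/- Let k be an algebraically closed field of characteristic ≠ 2 and ≠ 5. Then the degenerate fibers of the projection φ_1: S_1 → P^1 are exactly the fibers over the 8 points (1:0), (0:1), (1:1), (1:-1), (1:(√5+1)/2), (1:(√5-1)/2), (1:-(√5+1)/2), (1:-(√5-1)/2). -/
import Mathlib

open MvPolynomial

/-- The bihomogeneous polynomial `F₁ = u²z⁴ - xyz³w + (x²+y²-3u²)z²w² - xyzw³ + u²w⁴`
in variables `x = X 0`, `y = X 1`, `u = X 2`, `z = X 3`, `w = X 4`. -/
noncomputable def F1poly (k : Type) [CommRing k] : MvPolynomial (Fin 5) k :=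
  X 2 ^ 2 * X 3 ^ 4 - X 0 * X 1 * X 3 ^ 3 * X 4
    + (X 0 ^ 2 + X 1 ^ 2 - 3 * X 2 ^ 2) * X 3 ^ 2 * X 4 ^ 2
    - X 0 * X 1 * X 3 * X 4 ^ 3 + X 2 ^ 2 * X 4 ^ 4

private lemma threeC (k : Type) [CommRing k] : (3 : MvPolynomial (Fin 5) k) = C 3 :=
  (map_ofNat C 3).symm

private lemma evald0 (k : Type) [CommRing k] (a b c z w : k) :
    eval ![a,b,c,z,w] (pderiv 0 (F1poly k)) = 2*a*z^2*w^2 - b*z^3*w - b*z*w^3 := by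
  simp [F1poly, threeC, pderiv_X, Pi.single_apply]; ring

private lemma evald1 (k : Type) [CommRing k] (a b c z w : k) :
    eval ![a,b,c,z,w] (pderiv 1 (F1poly k)) = 2*b*z^2*w^2 - a*z^3*w - a*z*w^3 := by
  simp [F1poly, threeC, pderiv_X, Pi.single_apply]; ring

private lemma evald2 (k : Type) [CommRing k] (a b c z w : k) :
    eval ![a,b,c,z,w] (pderiv 2 (F1poly k)) = 2*c*(z^4 - 3*z^2*w^2 + w^4) := by
  simp [F1poly, threeC, pderiv_X, Pi.single_apply]; ring

private lemma vec_ne (k : Type) [Field k] (a b c : k) (ha : a ≠ 0) :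
    (![a,b,c] : Fin 3 → k) ≠ 0 := fun h => ha (congrFun h 0)

private lemma key (k : Type) [Field k] (h2 : (2:k) ≠ 0) (z w : k) :
    (∃ v : Fin 3 → k, v ≠ 0 ∧
        2*(v 0)*z^2*w^2 - (v 1)*z^3*w - (v 1)*z*w^3 = 0 ∧
        2*(v 1)*z^2*w^2 - (v 0)*z^3*w - (v 0)*z*w^3 = 0 ∧
        2*(v 2)*(z^4 - 3*z^2*w^2 + w^4) = 0) ↔
      z*w*(z-w)*(z+w)*(z^4 - 3*z^2*w^2 + w^4) = 0 := by
  constructor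
  · rintro ⟨v, hv, e0, e1, e2⟩
    by_cases hc : v 2 = 0
    · have hab : (v 0 ≠ 0) ∨ (v 1 ≠ 0) := by
        by_contra h
        push_neg at h
        apply hv
        funext i
        fin_cases i <;> simp [h.1, h.2, hc]
      have hsq : (z*w*(z-w)*(z+w))^2 * v 0 = 0 ∧ (z*w*(z-w)*(z+w))^2 * v 1 = 0 := by
        constructor
        · linear_combination (-(2*z^2*w^2)) * e0 - (z^3*w + z*w^3) * e1
        · linear_combination (-(2*z^2*w^2)) * e1 - (z^3*w + z*w^3) * e0
      have hz : z*w*(z-w)*(z+w) = 0 := by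
        rcases hab with h | h
        · rcases mul_eq_zero.mp hsq.1 with h' | h'
          · exact pow_eq_zero_iff (by norm_num) |>.mp h'
          · exact absurd h' h
        · rcases mul_eq_zero.mp hsq.2 with h' | h'
          · exact pow_eq_zero_iff (by norm_num) |>.mp h'
          · exact absurd h' h
      rw [hz, zero_mul]
    · have hq : z^4 - 3*z^2*w^2 + w^4 = 0 := by
        rcases mul_eq_zero.mp e2 with h | h
        · rcases mul_eq_zero.mp h with h | h
          · exact absurd h h2
          · exact absurd h hc
        · exact h
      rw [hq, mul_zero]
  · intro hp
    rcases mul_eq_zero.mp hp with h | h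
    · rcases mul_eq_zero.mp h with h | h
      · rcases mul_eq_zero.mp h with h | h
        · rcases mul_eq_zero.mp h with h | h
          · exact ⟨![1,0,0], vec_ne k 1 0 0 one_ne_zero, by simp [h]⟩
          · exact ⟨![1,0,0], vec_ne k 1 0 0 one_ne_zero, by simp [h]⟩
        · refine ⟨![1,1,0], vec_ne k 1 1 0 one_ne_zero, ?_, ?_, ?_⟩
          · simp only [Matrix.cons_val_zero, Matrix.cons_val_one, Matrix.head_cons]
            linear_combination (z*w^2 - z^2*w) * h
          · simp only [Matrix.cons_val_zero, Matrix.cons_val_one, Matrix.head_cons]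
            linear_combination (z*w^2 - z^2*w) * h
          · simp
      · refine ⟨![1,-1,0], vec_ne k 1 (-1) 0 one_ne_zero, ?_, ?_, ?_⟩
        · simp only [Matrix.cons_val_zero, Matrix.cons_val_one, Matrix.head_cons]
          linear_combination (z*w^2 + z^2*w) * h
        · simp only [Matrix.cons_val_zero, Matrix.cons_val_one, Matrix.head_cons]
          linear_combination (-(z*w^2) - z^2*w) * h
        · simp
    · exact ⟨![0,0,1], fun hh => one_ne_zero (congrFun hh 2), by simp [h]⟩

private lemma lhs_iff (k : Type) [Field k] (h2 : (2:k) ≠ 0) (z w : k) :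
    (∃ v : Fin 3 → k, v ≠ 0 ∧ ∀ i : Fin 3,
        eval ![v 0, v 1, v 2, z, w]
          (MvPolynomial.pderiv (Fin.castLE (by norm_num) i) (F1poly k)) = 0) ↔
      z*w*(z-w)*(z+w)*(z^4 - 3*z^2*w^2 + w^4) = 0 := by
  rw [← key k h2 z w]
  apply exists_congr
  intro v
  apply and_congr_right
  intro _
  constructor
  · intro h
    refine ⟨?_, ?_, ?_⟩
    · have := h 0
      rwa [show (Fin.castLE (by norm_num) (0:Fin 3)) = (0:Fin 5) from rfl, evald0] at this
    · have := h 1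
      rwa [show (Fin.castLE (by norm_num) (1:Fin 3)) = (1:Fin 5) from rfl, evald1] at this
    · have := h 2
      rwa [show (Fin.castLE (by norm_num) (2:Fin 3)) = (2:Fin 5) from rfl, evald2] at this
  · rintro ⟨e0, e1, e2⟩ i
    fin_cases i
    · show eval ![v 0, v 1, v 2, z, w] (pderiv (0:Fin 5) (F1poly k)) = 0
      rw [evald0]; exact e0
    · show eval ![v 0, v 1, v 2, z, w] (pderiv (1:Fin 5) (F1poly k)) = 0
      rw [evald1]; exact e1
    · show eval ![v 0, v 1, v 2, z, w] (pderiv (2:Fin 5) (F1poly k)) = 0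
      rw [evald2]; exact e2

private lemma bigiff (k : Type) [Field k] (h2 : (2:k) ≠ 0) (r : k) (hr : r ^ 2 = 5)
    (z w : k) :
    z*w*(z-w)*(z+w)*(z^4 - 3*z^2*w^2 + w^4) = 0 ↔
      (z ≠ 0 ∧ w = 0*z) ∨ z = 0 ∨ (z ≠ 0 ∧ w = 1*z) ∨ (z ≠ 0 ∧ w = -1*z) ∨
      (z ≠ 0 ∧ w = (r+1)/2*z) ∨ (z ≠ 0 ∧ w = (r-1)/2*z) ∨
      (z ≠ 0 ∧ w = -((r+1)/2)*z) ∨ (z ≠ 0 ∧ w = -((r-1)/2)*z) := by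
  have hfact : z^4 - 3*z^2*w^2 + w^4 =
      (w - (r+1)/2*z) * (w + (r+1)/2*z) * (w - (r-1)/2*z) * (w + (r-1)/2*z) := by
    have hi : (2:k) * (2:k)⁻¹ = 1 := mul_inv_cancel₀ h2
    linear_combination
      (3*z^2*w^2*(2*(2:k)⁻¹+1) - z^4*(1+2*(2:k)⁻¹)*(1+4*(2:k)⁻¹^2)) * hi
      + (2*(2:k)⁻¹^2*z^2*w^2 - (2:k)⁻¹^4*z^4*(r^2+3)) * hr
  rw [hfact]
  constructor
  · intro hp
    by_cases hz0 : z = 0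
    · exact Or.inr (Or.inl hz0)
    rcases mul_eq_zero.mp hp with h | h
    · rcases mul_eq_zero.mp h with h | h
      · rcases mul_eq_zero.mp h with h | h
        · rcases mul_eq_zero.mp h with h | h
          · exact absurd h hz0
          · exact Or.inl ⟨hz0, by linear_combination h⟩
        · exact Or.inr (Or.inr (Or.inl ⟨hz0, by linear_combination -h⟩))
      · exact Or.inr (Or.inr (Or.inr (Or.inl ⟨hz0, by linear_combination h⟩)))
    · rcases mul_eq_zero.mp h with h | h
      · rcases mul_eq_zero.mp h with h | h
        · rcases mul_eq_zero.mp h with h | h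
          · exact Or.inr (Or.inr (Or.inr (Or.inr (Or.inl ⟨hz0, by linear_combination h⟩))))
          · exact Or.inr (Or.inr (Or.inr (Or.inr (Or.inr (Or.inr (Or.inl
              ⟨hz0, by linear_combination h⟩))))))
        · exact Or.inr (Or.inr (Or.inr (Or.inr (Or.inr (Or.inl
            ⟨hz0, by linear_combination h⟩)))))
      · exact Or.inr (Or.inr (Or.inr (Or.inr (Or.inr (Or.inr (Or.inr
          ⟨hz0, by linear_combination h⟩))))))
  · rintro (⟨_, h⟩ | h | ⟨_, h⟩ | ⟨_, h⟩ | ⟨_, h⟩ | ⟨_, h⟩ | ⟨_, h⟩ | ⟨_, h⟩) <;>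
      rw [h] <;> ring

private lemma mk1c (k : Type) [Field k] (Q : Projectivization k (Fin 2 → k)) (c : k)
    (h : (![1,c] : Fin 2 → k) ≠ 0) :
    Q = Projectivization.mk k ![1,c] h ↔ (Q.rep 0 ≠ 0 ∧ Q.rep 1 = c * Q.rep 0) := by
  constructor
  · intro hQ
    obtain ⟨a, ha⟩ := (Projectivization.mk_eq_mk_iff k Q.rep ![1,c] Q.rep_nonzero h).mp
      (by rw [Q.mk_rep, hQ])
    have h0 : Q.rep 0 = a := by rw [← ha]; simp [Units.smul_def]
    have h1 : Q.rep 1 = a * c := by rw [← ha]; simp [Units.smul_def]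
    exact ⟨by rw [h0]; exact a.ne_zero, by rw [h0, h1]; ring⟩
  · rintro ⟨h0, h1⟩
    rw [← Q.mk_rep]
    apply (Projectivization.mk_eq_mk_iff k Q.rep ![1,c] Q.rep_nonzero h).mpr
    refine ⟨Units.mk0 (Q.rep 0) h0, ?_⟩
    funext i
    fin_cases i <;> simp [Units.smul_def, h1] <;> ring

private lemma mk01 (k : Type) [Field k] (Q : Projectivization k (Fin 2 → k))
    (h : (![0,1] : Fin 2 → k) ≠ 0) :
    Q = Projectivization.mk k ![0,1] h ↔ Q.rep 0 = 0 := by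
  constructor
  · intro hQ
    obtain ⟨a, ha⟩ := (Projectivization.mk_eq_mk_iff k Q.rep ![0,1] Q.rep_nonzero h).mp
      (by rw [Q.mk_rep, hQ])
    rw [← ha]; simp [Units.smul_def]
  · intro h0
    have h1 : Q.rep 1 ≠ 0 := by
      intro h1
      apply Q.rep_nonzero
      funext i; fin_cases i <;> simpa using by assumption
    rw [← Q.mk_rep]
    apply (Projectivization.mk_eq_mk_iff k Q.rep ![0,1] Q.rep_nonzero h).mpr
    refine ⟨Units.mk0 (Q.rep 1) h1, ?_⟩
    funext i
    fin_cases i <;> simp [Units.smul_def, h0]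

private lemma char_ne (k : Type) [Field k] (p : ℕ) (hp : p.Prime) (h : ringChar k ≠ p) :
    ((p : ℕ) : k) ≠ 0 := by
  intro hp0
  have hd : ringChar k ∣ p := (ringChar.spec k p).mp hp0
  rcases hp.eq_one_or_self_of_dvd _ hd with h1 | h1
  · exact CharP.ringChar_ne_one h1
  · exact h h1

/-- A fiber of the conic bundle `φ₁ : S₁ → ℙ¹` over a point `Q` of `ℙ¹` is degenerate
iff the conic has a singular point, i.e. there is a nonzero vector `(x,y,u)` at which all
the partial derivatives of `F₁` with respect to `x`, `y`, `u` vanish. -/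
theorem stmt_15 (k : Type) [Field k] [IsAlgClosed k]
    (h2 : ringChar k ≠ 2) (h5 : ringChar k ≠ 5) (r : k) (hr : r ^ 2 = 5) :
    {Q : Projectivization k (Fin 2 → k) |
        ∃ v : Fin 3 → k, v ≠ 0 ∧ ∀ i : Fin 3,
          eval ![v 0, v 1, v 2, Q.rep 0, Q.rep 1]
            (MvPolynomial.pderiv (Fin.castLE (by norm_num) i) (F1poly k)) = 0} =
      {Projectivization.mk k ![1, 0] (fun h => one_ne_zero (congrFun h 0)),
       Projectivization.mk k ![0, 1] (fun h => one_ne_zero (congrFun h 1)),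
       Projectivization.mk k ![1, 1] (fun h => one_ne_zero (congrFun h 0)),
       Projectivization.mk k ![1, -1] (fun h => one_ne_zero (congrFun h 0)),
       Projectivization.mk k ![1, (r + 1) / 2] (fun h => one_ne_zero (congrFun h 0)),
       Projectivization.mk k ![1, (r - 1) / 2] (fun h => one_ne_zero (congrFun h 0)),
       Projectivization.mk k ![1, -((r + 1) / 2)] (fun h => one_ne_zero (congrFun h 0)),
       Projectivization.mk k ![1, -((r - 1) / 2)] (fun h => one_ne_zero (congrFun h 0))} := by
  have h2' : (2:k) ≠ 0 := by
    have := char_ne k 2 Nat.prime_two h2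
    simpa using this
  ext Q
  simp only [Set.mem_setOf_eq, Set.mem_insert_iff, Set.mem_singleton_iff]
  rw [lhs_iff k h2' (Q.rep 0) (Q.rep 1),
    mk1c k Q 0, mk01 k Q, mk1c k Q 1, mk1c k Q (-1),
    mk1c k Q ((r+1)/2), mk1c k Q ((r-1)/2), mk1c k Q (-((r+1)/2)), mk1c k Q (-((r-1)/2))]
  exact bigiff k h2' r hr (Q.rep 0) (Q.rep 1)
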